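/- arXiv:1711.02502 — 4 statements merged into one kernel-verified Lean document; each statement's English description precedes it below -/
import Mathlib

section
/- Let n be an odd positive integer and let a, b ∈ {1, −1}^n. The circulant matrices A = c(a) and B = c(b) satisfy A Aᵀ + B Bᵀ = (2n − 2) I + 2 J (I the identity and J the all-ones n×n matrix) if and only if there exist integers α, β with α² + β² = 4n − 2 such that ∑_{s=0}^{n−1} a_s = α, ∑_{s=0}^{n−1} b_s = β, and a ⋆ a + b ⋆ b = (2n, 2, 2, …, 2). -/
/-!
The `(i, j)` entry of `c(a) c(a)ᵀ` is `(a ⋆ a)(i - j)`, so the matrix identity is exactly the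
autocorrelation identity. Summing that identity over `s` and using `∑ₛ (a ⋆ a)ₛ = (∑ₛ aₛ)²`
gives `α² + β² = 4n - 2`, where `α`, `β` are integers because the entries are `±1`.
-/

open Matrix

/-- The circulant matrix `c(a)` with entries `c(a)_{i,j} = a_{(j-i) mod n}`. -/
def circ {n : ℕ} (a : Fin n → ℝ) : Matrix (Fin n) (Fin n) ℝ :=
  Matrix.of fun i j => a (j - i)

/-- Periodic autocorrelation of a vector `a ∈ ℝ^n`. -/
def autocorr {n : ℕ} (a : Fin n → ℝ) : Fin n → ℝ :=
  fun s => ∑ l, a l * a (l + s)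

section Circulant

variable {n : ℕ} [NeZero n]

theorem circ_mul_transpose_apply (a : Fin n → ℝ) (i j : Fin n) :
    (circ a * (circ a)ᵀ) i j = autocorr a (i - j) := by
  simp only [Matrix.mul_apply, Matrix.transpose_apply, circ, Matrix.of_apply, autocorr]
  refine (Fintype.sum_equiv (Equiv.addRight i) _ _ fun l => ?_).symm
  simp only [Equiv.coe_addRight, add_sub_cancel_right, add_sub_assoc]

theorem sum_autocorr (a : Fin n → ℝ) : ∑ s, autocorr a s = (∑ s, a s) ^ 2 := by
  have shift : ∀ l : Fin n, ∑ s, a l * a (l + s) = a l * ∑ s, a s := fun l => by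
    rw [Finset.mul_sum]
    exact Fintype.sum_equiv (Equiv.addLeft l) _ _ fun _ => rfl
  simp only [autocorr]
  rw [Finset.sum_comm, Finset.sum_congr rfl fun l _ => shift l, ← Finset.sum_mul, sq]

theorem circ_gram_eq_iff_autocorr (a b : Fin n → ℝ) :
    (circ a * (circ a)ᵀ + circ b * (circ b)ᵀ =
        ((2 * (n : ℝ) - 2)) • (1 : Matrix (Fin n) (Fin n) ℝ) +
          (2 : ℝ) • (Matrix.of fun _ _ => (1 : ℝ))) ↔
      ∀ s : Fin n, autocorr a s + autocorr b s = if s = 0 then 2 * (n : ℝ) else 2 := by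
  constructor
  · intro h s
    have hs := congr_fun (congr_fun h s) 0
    simp only [Matrix.add_apply, circ_mul_transpose_apply, Matrix.smul_apply,
      Matrix.one_apply, Matrix.of_apply, smul_eq_mul, sub_zero] at hs
    rw [hs]
    split_ifs <;> ring
  · intro h
    ext i j
    simp only [Matrix.add_apply, circ_mul_transpose_apply, Matrix.smul_apply,
      Matrix.one_apply, Matrix.of_apply, smul_eq_mul, h, sub_eq_zero]
    split_ifs with hij
    · subst hij; ring
    · ring

theorem sq_sum_add_sq_sum_of_autocorr {a b : Fin n → ℝ}
    (h : ∀ s : Fin n, autocorr a s + autocorr b s = if s = 0 then 2 * (n : ℝ) else 2) :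
    (∑ s, a s) ^ 2 + (∑ s, b s) ^ 2 = 4 * (n : ℝ) - 2 := by
  rw [← sum_autocorr a, ← sum_autocorr b, ← Finset.sum_add_distrib]
  calc ∑ s, (autocorr a s + autocorr b s)
      = ∑ s : Fin n, (2 + if s = 0 then 2 * (n : ℝ) - 2 else 0) := by
        congr! 1 with s; rw [h s]; split_ifs <;> ring
    _ = 4 * (n : ℝ) - 2 := by
        simp only [Finset.sum_add_distrib, Finset.sum_ite_eq', Finset.mem_univ, if_true,
          Finset.sum_const, Finset.card_univ, Fintype.card_fin, nsmul_eq_mul]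
        ring

end Circulant

theorem exists_int_sum_eq_of_sign {ι : Type*} [Fintype ι] {a : ι → ℝ}
    (ha : ∀ s, a s = 1 ∨ a s = -1) : ∃ α : ℤ, ∑ s, a s = α := by
  have hint : ∀ s, ∃ z : ℤ, a s = z := fun s => (ha s).elim
    (fun h => ⟨1, by simp [h]⟩) fun h => ⟨-1, by simp [h]⟩
  choose z hz using hint
  exact ⟨∑ s, z s, by push_cast; exact Finset.sum_congr rfl fun s _ => hz s⟩

theorem Doptimal_characterization_general {n : ℕ} [NeZero n]
    (a b : Fin n → ℝ) (ha : ∀ s, a s = 1 ∨ a s = -1) (hb : ∀ s, b s = 1 ∨ b s = -1) :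
    (circ a * (circ a)ᵀ + circ b * (circ b)ᵀ =
        ((2 * (n : ℝ) - 2)) • (1 : Matrix (Fin n) (Fin n) ℝ) +
          (2 : ℝ) • (Matrix.of fun _ _ => (1 : ℝ))) ↔
      (∃ α β : ℤ, α ^ 2 + β ^ 2 = 4 * (n : ℤ) - 2 ∧
        (∑ s, a s = (α : ℝ)) ∧ (∑ s, b s = (β : ℝ)) ∧
        (∀ s : Fin n, autocorr a s + autocorr b s =
          if s = 0 then 2 * (n : ℝ) else 2)) := by
  rw [circ_gram_eq_iff_autocorr]
  refine ⟨fun h => ?_, fun ⟨_, _, _, _, _, h⟩ => h⟩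
  obtain ⟨α, hα⟩ := exists_int_sum_eq_of_sign ha
  obtain ⟨β, hβ⟩ := exists_int_sum_eq_of_sign hb
  have hsq := sq_sum_add_sq_sum_of_autocorr h
  rw [hα, hβ] at hsq
  exact ⟨α, β, by exact_mod_cast hsq, hα, hβ, h⟩

/-- Characterization of D-optimal designs of circulant type: for `n` odd and
`a, b ∈ {±1}^n`, the circulant matrices `A = c(a)`, `B = c(b)` satisfy
`AAᵀ + BBᵀ = (2n-2)I + 2J` iff there are integers `α, β` with `α² + β² = 4n - 2`,
`∑ a_s = α`, `∑ b_s = β` and `a ⋆ a + b ⋆ b = (2n, 2, …, 2)`. -/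
theorem Doptimal_characterization {n : ℕ} [NeZero n] (hodd : Odd n)
    (a b : Fin n → ℝ) (ha : ∀ s, a s = 1 ∨ a s = -1) (hb : ∀ s, b s = 1 ∨ b s = -1) :
    (circ a * (circ a)ᵀ + circ b * (circ b)ᵀ =
        ((2 * (n : ℝ) - 2)) • (1 : Matrix (Fin n) (Fin n) ℝ) +
          (2 : ℝ) • (Matrix.of fun _ _ => (1 : ℝ))) ↔
      (∃ α β : ℤ, α ^ 2 + β ^ 2 = 4 * (n : ℤ) - 2 ∧
        (∑ s, a s = (α : ℝ)) ∧ (∑ s, b s = (β : ℝ)) ∧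
        (∀ s : Fin n, autocorr a s + autocorr b s =
          if s = 0 then 2 * (n : ℝ) else 2)) :=
  Doptimal_characterization_general a b ha hb
end

section
/- There exists a circulant weighing matrix CW(126, 64); that is, there exists a vector a ∈ {0, 1, −1}^{126} such that the circulant matrix W = c(a) satisfies W Wᵀ = 64 I, where I is the 126×126 identity matrix. -/
open Matrix

/-- The entries of our circulant weighing matrix, as integers. -/
def cwList : List ℤ :=
  [0,0,0,1,1,0,0,0,0,1,1,0,-1,1,0,1,1,0,1,-1,0,1,1,0,1,-1,0,1,1,0,-1,1,0,-1,-1,0,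
   0,0,0,-1,-1,0,1,-1,0,0,0,0,0,0,0,-1,-1,0,1,-1,0,1,1,0,-1,1,0,0,0,0,1,-1,0,0,0,
   0,1,-1,0,-1,-1,0,1,-1,0,1,1,0,1,-1,0,1,1,0,1,-1,0,-1,-1,0,-1,1,0,0,0,0,-1,1,0,
   1,1,0,0,0,0,0,0,0,-1,1,0,1,1,0,1,-1,0,-1,-1,0]

def aInt : Fin 126 → ℤ := fun i => cwList.getD i.val 0

set_option maxRecDepth 40000 in
lemma aInt_mem : ∀ s : Fin 126, aInt s = 0 ∨ aInt s = 1 ∨ aInt s = -1 := by decide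

set_option maxRecDepth 1000000 in
set_option maxHeartbeats 4000000 in
lemma key : ∀ s : Fin 126,
    (∑ t : Fin 126, aInt t * aInt (t + s)) = if s = 0 then 64 else 0 := by decide

/-- There exists a circulant weighing matrix `CW(126, 64)`. -/
theorem exists_CW_126_64 :
    ∃ a : Fin 126 → ℝ, (∀ s, a s ∈ ({0, 1, -1} : Set ℝ)) ∧
      circ a * (circ a)ᵀ = (64 : ℝ) • (1 : Matrix (Fin 126) (Fin 126) ℝ) := by
  refine ⟨fun i => ((aInt i : ℤ) : ℝ), ?_, ?_⟩
  · intro s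
    rcases aInt_mem s with h | h | h <;> simp [h]
  · ext i j
    have hentry : (circ (fun i => ((aInt i : ℤ) : ℝ)) * (circ (fun i => ((aInt i : ℤ) : ℝ)))ᵀ) i j
        = ∑ k : Fin 126, ((aInt (k - i) : ℤ) : ℝ) * ((aInt (k - j) : ℤ) : ℝ) := by
      simp [Matrix.mul_apply, circ, Matrix.transpose_apply]
    rw [hentry]
    have hre : ∑ k : Fin 126, ((aInt (k - i) : ℤ) : ℝ) * ((aInt (k - j) : ℤ) : ℝ)
        = ∑ t : Fin 126, ((aInt t : ℤ) : ℝ) * ((aInt (t + (i - j)) : ℤ) : ℝ) := by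
      apply Fintype.sum_equiv (Equiv.subRight i)
      intro k
      show ((aInt (k - i) : ℤ) : ℝ) * ((aInt (k - j) : ℤ) : ℝ)
          = ((aInt (k - i) : ℤ) : ℝ) * ((aInt (k - i + (i - j)) : ℤ) : ℝ)
      rw [sub_add_sub_cancel]
    rw [hre]
    have : ∑ t : Fin 126, ((aInt t : ℤ) : ℝ) * ((aInt (t + (i - j)) : ℤ) : ℝ)
        = (((∑ t : Fin 126, aInt t * aInt (t + (i - j))) : ℤ) : ℝ) := by
      push_cast
      rfl
    rw [this, key (i - j)]
    by_cases h : i = j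
    · subst h
      simp [Matrix.one_apply]
    · have h2 : i - j ≠ 0 := sub_ne_zero.mpr h
      simp [h2, Matrix.one_apply, h]
end

section
/- There exists a circulant weighing matrix CW(28, 16); that is, there exists a vector a ∈ {0, 1, −1}^{28} such that the circulant matrix W = c(a) satisfies W Wᵀ = 16 I, where I is the 28×28 identity matrix. -/
open Matrix

def cwInt : Fin 28 → ℤ := fun k =>
  if k.val ∈ [2,4,5,9,12,16,18,25,26,27] then 1
  else if k.val ∈ [6,11,13,19,20,23] then -1 else 0

def cwVec : Fin 28 → ℝ := fun k => (cwInt k : ℝ)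

lemma cwInt_key : ∀ d : Fin 28, (∑ k, cwInt k * cwInt (k + d)) =
    if d = 0 then 16 else 0 := by decide

lemma cwVec_key (d : Fin 28) : (∑ k, cwVec k * cwVec (k + d)) =
    if d = 0 then 16 else 0 := by
  have h := cwInt_key d
  have : ((∑ k, cwInt k * cwInt (k + d) : ℤ) : ℝ) =
      ∑ k, cwVec k * cwVec (k + d) := by
    push_cast [cwVec]; rfl
  rw [← this, h]
  split_ifs <;> norm_num

/-- There exists a circulant weighing matrix `CW(28, 16)`. -/
theorem exists_CW_28_16 :
    ∃ a : Fin 28 → ℝ, (∀ s, a s ∈ ({0, 1, -1} : Set ℝ)) ∧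
      circ a * (circ a)ᵀ = (16 : ℝ) • (1 : Matrix (Fin 28) (Fin 28) ℝ) := by
  refine ⟨cwVec, ?_, ?_⟩
  · intro s
    unfold cwVec cwInt
    split_ifs <;> simp
  · ext i j
    have h : (∑ k, cwVec (k - i) * cwVec (k - j)) =
        ∑ m, cwVec m * cwVec (m + (i - j)) := by
      apply Fintype.sum_equiv (Equiv.subRight i)
      intro k
      simp only [Equiv.subRight_apply]
      rw [sub_add_sub_cancel]
    simp only [Matrix.mul_apply, circ, transpose_apply, Matrix.of_apply]
    rw [h, cwVec_key]
    by_cases hij : i = j <;>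
      simp [hij, sub_eq_zero, Matrix.one_apply]
end

section
/- There exist vectors a, b ∈ {1, −1}^9 such that ∑_{s=0}^{8} a_s = 1, ∑_{s=0}^{8} b_s = 1, and a ⋆ a + b ⋆ b = (18, −2, −2, −2, −2, −2, −2, −2, −2); consequently, there exists a Hadamard matrix of order 20 with two circulant cores. -/
/-
The matrix is the array `[[X, Y], [Y', -X']]` whose four blocks are the circulant matrices
`A, B, Bᵀ, Aᵀ` of `a` and `b`, each bordered by a row of `-1`s and a column of `1`s. The
autocorrelation condition says `A Aᵀ + B Bᵀ = (2n + 2) I - 2 J`, and the borders contribute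
the missing `2 J`; since every row sum of `A`, `B`, `Aᵀ`, `Bᵀ` is `1`, the border rows are
orthogonal to all other rows, and since circulant matrices commute, the two halves of the array
are orthogonal.
-/

open Matrix

namespace Matrix

variable {α : Type*} [CommRing α] {m n p q : Type*}

def bordered (M : Matrix n n α) : Matrix (Unit ⊕ n) (Unit ⊕ n) α :=
  fromBlocks 1 (of fun _ _ => -1) (of fun _ _ => 1) M

theorem bordered_mul_transpose_bordered [Fintype n] {M N : Matrix n n α}
    (hM : ∀ i, ∑ j, M i j = 1) (hN : ∀ i, ∑ j, N i j = 1) :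
    bordered M * (bordered N)ᵀ =
      fromBlocks (of fun _ _ => 1 + (Fintype.card n : α)) 0 0 (of (fun _ _ => 1) + M * Nᵀ) := by
  simp only [bordered, fromBlocks_transpose, fromBlocks_multiply]
  congr 1 <;> ext i j <;> simp [mul_apply, Finset.sum_neg_distrib, hM, hN]

theorem fromBlocks_mul_transpose_eq_smul_one [Fintype p] [Fintype q] [DecidableEq m]
    [DecidableEq n] {X : Matrix m p α} {Y : Matrix m q α} {Y' : Matrix n p α}
    {X' : Matrix n q α} {c : α} (hXY : X * Xᵀ + Y * Yᵀ = c • 1)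
    (hXY' : Y' * Y'ᵀ + X' * X'ᵀ = c • 1) (hcomm : X * Y'ᵀ = Y * X'ᵀ) :
    fromBlocks X Y Y' (-X') * (fromBlocks X Y Y' (-X'))ᵀ = c • 1 := by
  have hcomm' : Y' * Xᵀ = X' * Yᵀ := by
    rw [← transpose_transpose (Y' * Xᵀ), transpose_mul, transpose_transpose, hcomm,
      transpose_mul, transpose_transpose]
  rw [fromBlocks_transpose, fromBlocks_multiply, ← fromBlocks_one, fromBlocks_smul]
  simp [transpose_neg, hXY, hXY', hcomm, hcomm']

theorem bordered_mul_transpose_add_eq_smul_one [Fintype n] [DecidableEq n] {M N : Matrix n n α}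
    (hM : ∀ i, ∑ j, M i j = 1) (hN : ∀ i, ∑ j, N i j = 1)
    (hMN : M * Mᵀ + N * Nᵀ = of fun i j => if i = j then 2 * (Fintype.card n : α) else -2) :
    bordered M * (bordered M)ᵀ + bordered N * (bordered N)ᵀ =
      (2 * Fintype.card n + 2 : α) • 1 := by
  rw [bordered_mul_transpose_bordered hM hM, bordered_mul_transpose_bordered hN hN,
    fromBlocks_add, ← fromBlocks_one, fromBlocks_smul]
  congr 1
  · ext; simp; ring
  · simp
  · simp
  · ext i j
    have hij := congr_fun (congr_fun hMN i) j
    simp only [add_apply, of_apply, smul_apply, one_apply, smul_eq_mul] at hij ⊢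
    split_ifs at hij ⊢ <;> linear_combination hij

section Circulant

variable {G : Type*} [Fintype G]

theorem sum_circulant_apply_right [AddGroup G] (v : G → α) (i : G) :
    ∑ j, circulant v i j = ∑ j, v j :=
  (Equiv.subLeft i).sum_comp v

theorem sum_circulant_apply_left [AddGroup G] (v : G → α) (j : G) :
    ∑ i, circulant v i j = ∑ i, v i :=
  (Equiv.subRight j).sum_comp v

theorem transpose_circulant_mul_circulant [AddCommGroup G] (v : G → α) :
    (circulant v)ᵀ * circulant v = circulant v * (circulant v)ᵀ := by
  rw [transpose_circulant, circulant_mul_comm]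

end Circulant

theorem circulant_mul_transpose_circulant {k : ℕ} [NeZero k] (a : Fin k → ℝ) :
    circulant a * (circulant a)ᵀ = circulant (autocorr a) := by
  ext i j
  refine Fintype.sum_equiv (Equiv.subLeft j) _ _ fun l => ?_
  simp only [transpose_apply, circulant_apply, Equiv.subLeft_apply]
  rw [show j - l + (i - j) = i - l by abel, mul_comm]

theorem circulant_mul_transpose_add_of_autocorr {k : ℕ} [NeZero k] {a b : Fin k → ℝ}
    (hab : ∀ s, autocorr a s + autocorr b s = if s = 0 then 2 * (k : ℝ) else -2) :
    circulant a * (circulant a)ᵀ + circulant b * (circulant b)ᵀ =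
      of fun i j => if i = j then 2 * (Fintype.card (Fin k) : ℝ) else -2 := by
  ext i j
  simp [circulant_mul_transpose_circulant, circulant_apply, hab, sub_eq_zero]

def twoCirculantCoreMatrix {G : Type*} [Sub G] (a b : G → α) :
    Matrix ((Unit ⊕ G) ⊕ (Unit ⊕ G)) ((Unit ⊕ G) ⊕ (Unit ⊕ G)) α :=
  fromBlocks (bordered (circulant a)) (bordered (circulant b))
    (bordered (circulant b)ᵀ) (-bordered (circulant a)ᵀ)

theorem isHadamard_twoCirculantCoreMatrix {k : ℕ} [NeZero k] {a b : Fin k → ℝ}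
    (ha : ∀ s, a s = 1 ∨ a s = -1) (hb : ∀ s, b s = 1 ∨ b s = -1)
    (hsa : ∑ s, a s = 1) (hsb : ∑ s, b s = 1)
    (hab : ∀ s, autocorr a s + autocorr b s = if s = 0 then 2 * (k : ℝ) else -2) :
    (twoCirculantCoreMatrix a b).IsHadamard := by
  have hA : ∀ i, ∑ j, circulant a i j = 1 := fun i => (sum_circulant_apply_right a i).trans hsa
  have hB : ∀ i, ∑ j, circulant b i j = 1 := fun i => (sum_circulant_apply_right b i).trans hsb
  have hAt : ∀ i, ∑ j, (circulant a)ᵀ i j = 1 :=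
    fun i => (sum_circulant_apply_left a i).trans hsa
  have hBt : ∀ i, ∑ j, (circulant b)ᵀ i j = 1 :=
    fun i => (sum_circulant_apply_left b i).trans hsb
  have ha' : ∀ s, a s = -1 ∨ a s = 1 := fun s => (ha s).symm
  have hgram := circulant_mul_transpose_add_of_autocorr hab
  refine .of_mul_conjTranspose (fun i j => Unitary.mem_iff_eq_one_or_eq_neg_one.mpr ?_) ?_
    (IsRegular.of_ne_zero (by positivity))
  · rcases i with (_ | i) | (_ | i) <;> rcases j with (_ | j) | (_ | j) <;>
      simp [twoCirculantCoreMatrix, bordered, circulant_apply, neg_eq_iff_eq_neg, ha, ha', hb]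
  · rw [conjTranspose_eq_transpose_of_trivial, twoCirculantCoreMatrix,
      fromBlocks_mul_transpose_eq_smul_one (c := (2 * Fintype.card (Fin k) + 2 : ℝ))]
    · simp; ring
    · exact bordered_mul_transpose_add_eq_smul_one hA hB hgram
    · refine bordered_mul_transpose_add_eq_smul_one hBt hAt ?_
      rwa [transpose_transpose, transpose_transpose, transpose_circulant_mul_circulant,
        transpose_circulant_mul_circulant, add_comm]
    · rw [bordered_mul_transpose_bordered hA hBt, bordered_mul_transpose_bordered hB hAt,
        transpose_transpose, transpose_transpose, circulant_mul_comm]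

end Matrix

theorem exists_autocorr_pair_nine : ∃ a b : Fin 9 → ℝ,
    (∀ s, a s = 1 ∨ a s = -1) ∧ (∀ s, b s = 1 ∨ b s = -1) ∧
    (∑ s, a s = 1) ∧ (∑ s, b s = 1) ∧
    (∀ s : Fin 9, autocorr a s + autocorr b s = if s = 0 then 18 else -2) := by
  refine ⟨![1, 1, 1, 1, -1, 1, -1, -1, -1], ![1, 1, -1, 1, -1, 1, 1, -1, -1],
    ?_, ?_, ?_, ?_, ?_⟩ <;> (try intro s; fin_cases s) <;>
    simp [autocorr, Fin.sum_univ_succ] <;> norm_num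

/-- There exist `a, b ∈ {±1}^9` with `∑ a_s = 1`, `∑ b_s = 1` and
`a ⋆ a + b ⋆ b = (18, -2, …, -2)`; consequently, there exists a Hadamard matrix of
order 20 (with two circulant cores). -/
theorem exists_double_circulant_core_order_20 :
    (∃ a b : Fin 9 → ℝ,
      (∀ s, a s = 1 ∨ a s = -1) ∧ (∀ s, b s = 1 ∨ b s = -1) ∧
      (∑ s, a s = 1) ∧ (∑ s, b s = 1) ∧
      (∀ s : Fin 9, autocorr a s + autocorr b s = if s = 0 then 18 else -2)) ∧
    (∃ H : Matrix (Fin 20) (Fin 20) ℝ,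
      (∀ i j, H i j = 1 ∨ H i j = -1) ∧
      H * Hᵀ = (20 : ℝ) • (1 : Matrix (Fin 20) (Fin 20) ℝ)) := by
  obtain ⟨a, b, ha, hb, hsa, hsb, hab⟩ := exists_autocorr_pair_nine
  refine ⟨⟨a, b, ha, hb, hsa, hsb, hab⟩, ?_⟩
  let e : (Unit ⊕ Fin 9) ⊕ (Unit ⊕ Fin 9) ≃ Fin 20 := Fintype.equivFinOfCardEq rfl
  have hH := (isHadamard_twoCirculantCoreMatrix ha hb hsa hsb (by norm_num [hab])).reindex e e
  refine ⟨_, fun i j => Unitary.mem_iff_eq_one_or_eq_neg_one.mp (hH.apply_mem i j), ?_⟩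
  rw [← conjTranspose_eq_transpose_of_trivial, hH.mul_conjTranspose, Fintype.card_fin,
    Nat.cast_ofNat]
end
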